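/- Let M > 0, 0 < a ≤ M, m ∈ ℤ, set Δ(r) := r² − 2Mr + a², r₊ := M + √(M² − a²), Σ(r,θ) := r² + a² cos²θ, w(r,θ) := (r²+a²)²/Δ(r) − a² sin²θ, Ω := (r₊,∞) × (0,π), and let m₀ ≥ (|m|a/(2Mr₊)) · √(1 + 2M/r₊ + a²/r₊²). Then for every f ∈ C²(Ω,ℂ) with compact support contained in Ω one has ∫_Ω sinθ · [ Δ(r)|∂f/∂r|² + |∂f/∂θ|² + ( m²/sin²θ − m²a²/Δ(r) + m₀² Σ(r,θ) + 2m²a²r/(r₊ Δ(r)) − (m²a²/(4M²r₊²)) w(r,θ) ) |f|² ] dr dθ ≥ 0. -/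

import Mathlib

/-!
The derivative terms are nonnegative, so it suffices that the potential is nonnegative pointwise
on `Ω`. Using `sin²θ ≤ 1`, `Σ ≥ r²` and `w ≤ (r² + a²)²/Δ`, together with the mass bound in the
form `m²a² ≤ m₀² M r₊³`, the potential is at least `m²` times a rational function of `r` alone.
Its numerator vanishes at `r₊` (because `Δ(r₊) = 0`); multiplied by `r₊²` it factors as `r − r₊`
times a cubic in `r − r₊` whose coefficients are nonnegative as soon as `a² ≤ r₊²`.
-/

open MeasureTheory

/-- Kerr horizon function `Δ(r) = r² − 2Mr + a²`. -/
noncomputable def kerrDelta (M a r : ℝ) : ℝ := r ^ 2 - 2 * M * r + a ^ 2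

/-- Outer horizon radius `r₊ = M + √(M² − a²)`. -/
noncomputable def rPlus (M a : ℝ) : ℝ := M + Real.sqrt (M ^ 2 - a ^ 2)

/-- `Σ(r,θ) = r² + a² cos²θ`. -/
noncomputable def kerrSigma (a r θ : ℝ) : ℝ := r ^ 2 + a ^ 2 * Real.cos θ ^ 2

/-- The weight `w(r,θ) = (r²+a²)²/Δ(r) − a² sin²θ`. -/
noncomputable def kerrW (M a r θ : ℝ) : ℝ :=
  (r ^ 2 + a ^ 2) ^ 2 / kerrDelta M a r - a ^ 2 * Real.sin θ ^ 2

/-- Partial derivative in the first (radial) variable. -/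
noncomputable def pdr (f : ℝ × ℝ → ℂ) (p : ℝ × ℝ) : ℂ := deriv (fun x => f (x, p.2)) p.1

/-- Partial derivative in the second (angular) variable. -/
noncomputable def pdθ (f : ℝ × ℝ → ℂ) (p : ℝ × ℝ) : ℂ := deriv (fun y => f (p.1, y)) p.2

section Horizon

variable {M a r : ℝ}

theorem le_rPlus (M a : ℝ) : M ≤ rPlus M a :=
  le_add_of_nonneg_right (Real.sqrt_nonneg _)

theorem kerrDelta_rPlus (h : a ^ 2 ≤ M ^ 2) : kerrDelta M a (rPlus M a) = 0 := by
  have hsq : Real.sqrt (M ^ 2 - a ^ 2) ^ 2 = M ^ 2 - a ^ 2 := Real.sq_sqrt (by linarith)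
  rw [kerrDelta, rPlus]
  linear_combination hsq

theorem sq_le_rPlus_sq (hM : 0 ≤ M) (h : a ^ 2 ≤ M ^ 2) : a ^ 2 ≤ rPlus M a ^ 2 := by
  have hΔ := kerrDelta_rPlus h
  have hMrp := le_rPlus M a
  rw [kerrDelta] at hΔ
  nlinarith

theorem kerrDelta_pos (h : a ^ 2 ≤ M ^ 2) (hr : rPlus M a < r) : 0 < kerrDelta M a r := by
  have hM := le_rPlus M a
  have hfactor : kerrDelta M a r = (r - rPlus M a) * (r + rPlus M a - 2 * M) := by
    have hΔ := kerrDelta_rPlus h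
    rw [kerrDelta] at hΔ ⊢
    linear_combination hΔ
  rw [hfactor]
  exact mul_pos (by linarith) (by linarith)

/-- Since `Δ(r₊) = 0`, the radicand `1 + 2M/r₊ + a²/r₊²` equals `4M/r₊`. -/
theorem sq_mul_sq_le_of_mass_bound (hM : 0 < M) (ha : 0 ≤ a) (h : a ^ 2 ≤ M ^ 2) {m m₀ : ℝ}
    (hm₀ : m₀ ≥ |m| * a / (2 * M * rPlus M a) *
      Real.sqrt (1 + 2 * M / rPlus M a + a ^ 2 / rPlus M a ^ 2)) :
    m ^ 2 * a ^ 2 ≤ m₀ ^ 2 * (M * rPlus M a ^ 3) := by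
  set rp := rPlus M a
  have hrp : 0 < rp := hM.trans_le (le_rPlus M a)
  have hradicand : 1 + 2 * M / rp + a ^ 2 / rp ^ 2 = 4 * M / rp := by
    have hΔ := kerrDelta_rPlus h
    rw [kerrDelta] at hΔ
    field_simp
    linear_combination hΔ
  have hsq : (|m| * a / (2 * M * rp) * Real.sqrt (4 * M / rp)) ^ 2
      = m ^ 2 * a ^ 2 / (M * rp ^ 3) := by
    rw [mul_pow, Real.sq_sqrt (by positivity), div_pow, mul_pow, sq_abs]
    field_simp
    ring
  rw [hradicand] at hm₀
  have hle := pow_le_pow_left₀ (by positivity) hm₀ 2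
  rw [hsq, div_le_iff₀ (by positivity)] at hle
  exact hle

end Horizon

/-- With `rp = r₊`, this is `4M²r₊³Δ(r)` times the radial function of `kerr_radial_nonneg`. -/
theorem kerr_radial_poly_nonneg {M a rp r : ℝ} (hrp : 0 < rp) (ha : a ^ 2 ≤ rp ^ 2)
    (hrpeq : rp ^ 2 - 2 * M * rp + a ^ 2 = 0) (hr : rp ≤ r) :
    0 ≤ 4 * M ^ 2 * rp ^ 3 * (r ^ 2 - 2 * M * r + a ^ 2) + 4 * M * a ^ 2 * r ^ 2 *
      (r ^ 2 - 2 * M * r + a ^ 2) - 4 * M ^ 2 * rp ^ 3 * a ^ 2 + 8 * M ^ 2 * rp ^ 2 * a ^ 2 * r -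
      a ^ 2 * rp * (r ^ 2 + a ^ 2) ^ 2 := by
  set t := r - rp
  have ht : 0 ≤ t := sub_nonneg.2 hr
  have hc2 : 0 ≤ rp ^ 4 + 2 * a ^ 2 * rp ^ 2 - a ^ 4 := by nlinarith [sq_nonneg a]
  have hc1 : 0 ≤ rp ^ 6 + 2 * a ^ 2 * rp ^ 4 + a ^ 4 * rp ^ 2 - 4 * a ^ 6 := by
    nlinarith [pow_le_pow_left₀ (sq_nonneg a) ha 3, mul_le_mul_of_nonneg_left ha (sq_nonneg (a ^ 2)),
      mul_le_mul_of_nonneg_left (pow_le_pow_left₀ (sq_nonneg a) ha 2) (sq_nonneg a)]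
  have hcubic : 0 ≤ a ^ 2 * rp * (rp ^ 2 + 2 * a ^ 2) * t ^ 3
      + 2 * a ^ 2 * (rp ^ 4 + 2 * a ^ 2 * rp ^ 2 - a ^ 4) * t ^ 2
      + rp * (rp ^ 6 + 2 * a ^ 2 * rp ^ 4 + a ^ 4 * rp ^ 2 - 4 * a ^ 6) * t
      + rp ^ 2 * (rp ^ 2 - a ^ 2) * (rp ^ 2 + a ^ 2) ^ 2 := by
    have hgap := sub_nonneg.2 ha
    positivity
  refine nonneg_of_mul_nonneg_right (a := rp ^ 2) ?_ (by positivity)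
  have hfactor : rp ^ 2 * (4 * M ^ 2 * rp ^ 3 * (r ^ 2 - 2 * M * r + a ^ 2) + 4 * M * a ^ 2 *
      r ^ 2 * (r ^ 2 - 2 * M * r + a ^ 2) - 4 * M ^ 2 * rp ^ 3 * a ^ 2 +
      8 * M ^ 2 * rp ^ 2 * a ^ 2 * r - a ^ 2 * rp * (r ^ 2 + a ^ 2) ^ 2)
      = t * (a ^ 2 * rp * (rp ^ 2 + 2 * a ^ 2) * t ^ 3
      + 2 * a ^ 2 * (rp ^ 4 + 2 * a ^ 2 * rp ^ 2 - a ^ 4) * t ^ 2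
      + rp * (rp ^ 6 + 2 * a ^ 2 * rp ^ 4 + a ^ 4 * rp ^ 2 - 4 * a ^ 6) * t
      + rp ^ 2 * (rp ^ 2 - a ^ 2) * (rp ^ 2 + a ^ 2) ^ 2) := by
    simp only [t]
    linear_combination (-r * rp ^ 2 * a ^ 4 + r * rp ^ 6 - 2 * r ^ 2 * rp * a ^ 4
      - r ^ 2 * rp ^ 3 * a ^ 2 - r ^ 2 * rp ^ 5 + 2 * r ^ 3 * a ^ 4 + 2 * r ^ 3 * rp ^ 2 * a ^ 2
      - 2 * r ^ 4 * rp * a ^ 2 - 2 * M * r * rp ^ 3 * a ^ 2 + 2 * M * r * rp ^ 5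
      - 2 * M * r ^ 2 * rp ^ 4 + 4 * M * r ^ 3 * rp * a ^ 2 + 4 * M ^ 2 * r * rp ^ 4) * hrpeq
  rw [hfactor]
  exact mul_nonneg ht hcubic

section Potential

variable {M a r : ℝ}

theorem kerr_radial_nonneg (hM : 0 < M) (h : a ^ 2 ≤ M ^ 2) (hr : rPlus M a < r) :
    0 ≤ 1 - a ^ 2 / kerrDelta M a r + a ^ 2 * r ^ 2 / (M * rPlus M a ^ 3) +
      2 * a ^ 2 * r / (rPlus M a * kerrDelta M a r) -
      a ^ 2 / (4 * M ^ 2 * rPlus M a ^ 2) * ((r ^ 2 + a ^ 2) ^ 2 / kerrDelta M a r) := by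
  set rp := rPlus M a
  have hrp : 0 < rp := hM.trans_le (le_rPlus M a)
  have hΔ := kerrDelta_pos h hr
  have hpoly := kerr_radial_poly_nonneg hrp (sq_le_rPlus_sq hM.le h) (kerrDelta_rPlus h) hr.le
  have hrational : 1 - a ^ 2 / kerrDelta M a r + a ^ 2 * r ^ 2 / (M * rp ^ 3) +
      2 * a ^ 2 * r / (rp * kerrDelta M a r) -
      a ^ 2 / (4 * M ^ 2 * rp ^ 2) * ((r ^ 2 + a ^ 2) ^ 2 / kerrDelta M a r)
      = (4 * M ^ 2 * rp ^ 3 * kerrDelta M a r + 4 * M * a ^ 2 * r ^ 2 * kerrDelta M a r -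
          4 * M ^ 2 * rp ^ 3 * a ^ 2 + 8 * M ^ 2 * rp ^ 2 * a ^ 2 * r -
          a ^ 2 * rp * (r ^ 2 + a ^ 2) ^ 2) / (4 * M ^ 2 * rp ^ 3 * kerrDelta M a r) := by
    field_simp
    ring
  rw [hrational]
  exact div_nonneg hpoly (by positivity)

theorem kerr_potential_nonneg {θ : ℝ} (m m₀ : ℝ) (hM : 0 < M) (h : a ^ 2 ≤ M ^ 2)
    (hr : rPlus M a < r) (hθ : 0 < Real.sin θ)
    (hmass : m ^ 2 * a ^ 2 ≤ m₀ ^ 2 * (M * rPlus M a ^ 3)) :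
    0 ≤ m ^ 2 / Real.sin θ ^ 2 - m ^ 2 * a ^ 2 / kerrDelta M a r + m₀ ^ 2 * kerrSigma a r θ +
      2 * m ^ 2 * a ^ 2 * r / (rPlus M a * kerrDelta M a r) -
      m ^ 2 * a ^ 2 / (4 * M ^ 2 * rPlus M a ^ 2) * kerrW M a r θ := by
  set rp := rPlus M a
  have hrp : 0 < rp := hM.trans_le (le_rPlus M a)
  have hangular : m ^ 2 ≤ m ^ 2 / Real.sin θ ^ 2 :=
    le_div_self (sq_nonneg m) (by positivity) (Real.sin_sq_le_one θ)
  have hmassive : m ^ 2 * (a ^ 2 * r ^ 2 / (M * rp ^ 3)) ≤ m₀ ^ 2 * kerrSigma a r θ :=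
    calc m ^ 2 * (a ^ 2 * r ^ 2 / (M * rp ^ 3)) = m ^ 2 * a ^ 2 / (M * rp ^ 3) * r ^ 2 := by ring
      _ ≤ m₀ ^ 2 * r ^ 2 := by gcongr; rwa [div_le_iff₀ (by positivity)]
      _ ≤ m₀ ^ 2 * kerrSigma a r θ := by
        gcongr
        exact le_add_of_nonneg_right (by positivity)
  have hweight : m ^ 2 * a ^ 2 / (4 * M ^ 2 * rp ^ 2) * kerrW M a r θ ≤
      m ^ 2 * a ^ 2 / (4 * M ^ 2 * rp ^ 2) * ((r ^ 2 + a ^ 2) ^ 2 / kerrDelta M a r) := by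
    gcongr
    exact sub_le_self _ (by positivity)
  calc 0 ≤ m ^ 2 * (1 - a ^ 2 / kerrDelta M a r + a ^ 2 * r ^ 2 / (M * rp ^ 3) +
        2 * a ^ 2 * r / (rp * kerrDelta M a r) -
        a ^ 2 / (4 * M ^ 2 * rp ^ 2) * ((r ^ 2 + a ^ 2) ^ 2 / kerrDelta M a r)) :=
        mul_nonneg (sq_nonneg m) (kerr_radial_nonneg hM h hr)
    _ ≤ _ := by linear_combination hangular + hmassive + hweight

end Potential

theorem stmt_10_general (M a : ℝ) (m : ℤ) (m₀ : ℝ) (ha : 0 < a) (haM : a ≤ M)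
    (hm₀ : m₀ ≥ |(m : ℝ)| * a / (2 * M * rPlus M a) *
      Real.sqrt (1 + 2 * M / rPlus M a + a ^ 2 / rPlus M a ^ 2))
    (f : ℝ × ℝ → ℂ) :
    (0 : ℝ) ≤
      ∫ p in Set.Ioi (rPlus M a) ×ˢ Set.Ioo 0 Real.pi,
        Real.sin p.2 *
          (kerrDelta M a p.1 * ‖pdr f p‖ ^ 2 + ‖pdθ f p‖ ^ 2 +
            ((m : ℝ) ^ 2 / Real.sin p.2 ^ 2 -
                (m : ℝ) ^ 2 * a ^ 2 / kerrDelta M a p.1 +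
                m₀ ^ 2 * kerrSigma a p.1 p.2 +
                2 * (m : ℝ) ^ 2 * a ^ 2 * p.1 / (rPlus M a * kerrDelta M a p.1) -
                (m : ℝ) ^ 2 * a ^ 2 / (4 * M ^ 2 * rPlus M a ^ 2) * kerrW M a p.1 p.2) *
              ‖f p‖ ^ 2) := by
  have hM : 0 < M := ha.trans_le haM
  have haM' : a ^ 2 ≤ M ^ 2 := pow_le_pow_left₀ ha.le haM 2
  have hmass := sq_mul_sq_le_of_mass_bound hM ha.le haM' hm₀
  refine setIntegral_nonneg (measurableSet_Ioi.prod measurableSet_Ioo) ?_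
  rintro ⟨r, θ⟩ ⟨hr, hθ₀, hθπ⟩
  have hsin := Real.sin_pos_of_pos_of_lt_pi hθ₀ hθπ
  have hΔ := kerrDelta_pos haM' hr
  have hV := kerr_potential_nonneg (m : ℝ) m₀ hM haM' hr hsin hmass
  exact mul_nonneg hsin.le <| add_nonneg
    (add_nonneg (mul_nonneg hΔ.le (sq_nonneg _)) (sq_nonneg _)) (mul_nonneg hV (sq_nonneg _))

theorem stmt_10 (M a : ℝ) (m : ℤ) (m₀ : ℝ) (hM : 0 < M) (ha : 0 < a) (haM : a ≤ M)
    (hm₀ : m₀ ≥ |(m : ℝ)| * a / (2 * M * rPlus M a) *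
      Real.sqrt (1 + 2 * M / rPlus M a + a ^ 2 / rPlus M a ^ 2))
    (f : ℝ × ℝ → ℂ) (hf : ContDiff ℝ 2 f) (hfc : HasCompactSupport f)
    (hfsupp : tsupport f ⊆ Set.Ioi (rPlus M a) ×ˢ Set.Ioo 0 Real.pi) :
    (0 : ℝ) ≤
      ∫ p in Set.Ioi (rPlus M a) ×ˢ Set.Ioo 0 Real.pi,
        Real.sin p.2 *
          (kerrDelta M a p.1 * ‖pdr f p‖ ^ 2 + ‖pdθ f p‖ ^ 2 +
            ((m : ℝ) ^ 2 / Real.sin p.2 ^ 2 -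
                (m : ℝ) ^ 2 * a ^ 2 / kerrDelta M a p.1 +
                m₀ ^ 2 * kerrSigma a p.1 p.2 +
                2 * (m : ℝ) ^ 2 * a ^ 2 * p.1 / (rPlus M a * kerrDelta M a p.1) -
                (m : ℝ) ^ 2 * a ^ 2 / (4 * M ^ 2 * rPlus M a ^ 2) * kerrW M a p.1 p.2) *
              ‖f p‖ ^ 2) :=
  stmt_10_general M a m m₀ ha haM hm₀ f
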